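/- Let L be a finite lattice and K a field such that the join-meet ideal I_L ⊆ K[L] is a radical ideal, and let A, B ⊆ L be admissible subsets. Then P_A(L) ⊊ P_B(L) if and only if A ⊊ B and I_{L_A} : ∏_{a∉A} X_a ⊆ (I_{L_B} : ∏_{b∉B} X_b) + (X_b : b ∈ B∖A). -/

import Mathlib

open MvPolynomial

/-- The join-meet ideal of a finite lattice `L`: the ideal of `K[L]` generated by the
basic binomials `X a * X b - X (a ⊓ b) * X (a ⊔ b)` for incomparable `a, b ∈ L`. -/
noncomputable def joinMeetIdeal (K : Type*) [Field K] (L : Type*) [Lattice L] :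
    Ideal (MvPolynomial L K) :=
  Ideal.span {f | ∃ a b : L, ¬ a ≤ b ∧ ¬ b ≤ a ∧
    f = X a * X b - X (a ⊓ b) * X (a ⊔ b)}

/-- A subset `A` of a lattice is admissible if for every incomparable pair `a, b`,
`A` contains `a` or `b` iff `A` contains `a ⊓ b` or `a ⊔ b`. -/
def Admissible {L : Type*} [Lattice L] (A : Set L) : Prop :=
  ∀ a b : L, ¬ a ≤ b → ¬ b ≤ a → ((a ∈ A ∨ b ∈ A) ↔ (a ⊓ b ∈ A ∨ a ⊔ b ∈ A))

/-- The ideal `I_{L_A}` of `K[L]` generated by the basic binomials of the incomparable pairs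
of elements of `L ∖ A`. -/
noncomputable def sublatticeJoinMeetIdeal (K : Type*) [Field K] (L : Type*) [Lattice L]
    (A : Set L) : Ideal (MvPolynomial L K) :=
  Ideal.span {f | ∃ a b : L, a ∉ A ∧ b ∉ A ∧ ¬ a ≤ b ∧ ¬ b ≤ a ∧
    f = X a * X b - X (a ⊓ b) * X (a ⊔ b)}

open scoped Classical in
/-- The prime ideal `P_A(L) = (I_{L_A} : ∏_{a ∉ A} X a) + (X a : a ∈ A)`. -/
noncomputable def PA (K : Type*) [Field K] (L : Type*) [Lattice L] [Fintype L]
    (A : Set L) : Ideal (MvPolynomial L K) :=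
  Submodule.colon (sublatticeJoinMeetIdeal K L A)
      ((Ideal.span {∏ a ∈ Finset.univ.filter (fun a : L => a ∉ A), X a} : Ideal (MvPolynomial L K)) : Set (MvPolynomial L K)) ⊔
    Ideal.span {f | ∃ a ∈ A, f = (X a : MvPolynomial L K)}

/-!
Evaluating at the indicator vector of `L ∖ S` kills `P_S(L)`, so `X a ∈ P_S(L)` iff `a ∈ S`;
hence `P_A(L) ⊆ P_B(L)` forces `A ⊆ B`, and then `P_B(L) = (Q_B + (X b : b ∈ B ∖ A)) + (X a : a ∈ A)`
with `Q_S = I_{L_S} : ∏_{a ∉ S} X a`. The summand `(X a : a ∈ A)` can be dropped when bounding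
`Q_A`: the binomials of `L_A` and the product `∏_{a ∉ A} X a` live in `K[L ∖ A]`, and colon ideals
commute with extension from `K[L ∖ A]` (over which `K[L]` is free on the monomials in the
`A`-variables), so `Q_A` is generated by polynomials in the variables outside `A`. The retraction
`K[L] → K[L ∖ A]` killing the `A`-variables fixes these generators, maps `Q_B + (X b : b ∈ B ∖ A)`
into itself and kills `(X a : a ∈ A)`.
-/

namespace MvPolynomial

variable {σ R : Type*}

section CommRing

variable [CommRing R]

theorem map_rename_subtypeVal_colon {p : σ → Prop} (J : Ideal (MvPolynomial {i // p i} R))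
    (f : MvPolynomial {i // p i} R) :
    (J.map (rename Subtype.val)).colon (Ideal.span {rename Subtype.val f} : Set _) =
      (J.colon (Ideal.span {f} : Set _)).map (rename Subtype.val) := by
  classical
  -- Membership in an extended ideal is tested coefficientwise in the remaining variables.
  let e : MvPolynomial σ R ≃ₐ[R] MvPolynomial {i // ¬ p i} (MvPolynomial {i // p i} R) :=
    (renameEquiv R ((Equiv.sumComm _ _).trans (Equiv.sumCompl p)).symm).trans
      (sumAlgEquiv R _ _)
  have he : e.toRingEquiv.toRingHom.comp
      (rename (R := R) (Subtype.val : {i // p i} → σ)).toRingHom = C := by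
    refine ringHom_ext (fun r ↦ by simp [e]) fun i ↦ ?_
    simp [e, Equiv.sumCompl_symm_apply_of_pos i.2]
  have he' (q : MvPolynomial {i // p i} R) : e (rename Subtype.val q) = C q :=
    RingHom.congr_fun he q
  have hmem (I : Ideal (MvPolynomial {i // p i} R)) (g : MvPolynomial σ R) :
      g ∈ I.map (rename Subtype.val) ↔ ∀ m, (e g).coeff m ∈ I := by
    rw [← mem_map_C_iff, ← he, ← Ideal.map_map]
    exact (Ideal.apply_mem_of_equiv_iff (f := e.toRingEquiv)).symm
  ext g
  simp only [Ideal.mem_colon_span_singleton, hmem, map_mul, he', mul_comm (e g), coeff_C_mul,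
    mul_comm f]

end CommRing

variable (R) [CommSemiring R]

noncomputable def varIdeal (S : Set σ) : Ideal (MvPolynomial σ R) :=
  Ideal.span {f | ∃ i ∈ S, f = X i}

open scoped Classical in
noncomputable def killVars (A : Set σ) : MvPolynomial σ R →ₐ[R] MvPolynomial σ R :=
  aeval fun i ↦ if i ∈ A then 0 else X i

variable {R}

theorem varIdeal_sdiff_sup_varIdeal {A B : Set σ} (hAB : A ⊆ B) :
    varIdeal R (B \ A) ⊔ varIdeal R A = varIdeal R B := by
  rw [varIdeal, varIdeal, varIdeal, ← Ideal.span_union]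
  congr 1
  ext f
  constructor
  · rintro (⟨i, hi, rfl⟩ | ⟨i, hi, rfl⟩)
    exacts [⟨i, hi.1, rfl⟩, ⟨i, hAB hi, rfl⟩]
  · rintro ⟨i, hi, rfl⟩
    by_cases hiA : i ∈ A
    exacts [Or.inr ⟨i, hiA, rfl⟩, Or.inl ⟨i, ⟨hi, hiA⟩, rfl⟩]

theorem killVars_X_of_mem {A : Set σ} {i : σ} (hi : i ∈ A) : killVars R A (X i) = 0 := by
  simp [killVars, hi]

theorem killVars_X_of_notMem {A : Set σ} {i : σ} (hi : i ∉ A) : killVars R A (X i) = X i := by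
  simp [killVars, hi]

theorem killVars_comp_rename_subtypeVal {A : Set σ} {p : σ → Prop} (h : ∀ i, p i → i ∉ A) :
    (killVars R A).comp (rename Subtype.val) = rename (Subtype.val : {i // p i} → σ) :=
  algHom_ext fun i ↦ by simp [killVars_X_of_notMem (h i i.2)]

theorem map_killVars_varIdeal_self (A : Set σ) : (varIdeal R A).map (killVars R A) = ⊥ := by
  rw [varIdeal, Ideal.map_span, Ideal.span_eq_bot]
  rintro _ ⟨_, ⟨i, hi, rfl⟩, rfl⟩
  exact killVars_X_of_mem hi

theorem map_killVars_varIdeal_le {A S : Set σ} (h : Disjoint A S) :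
    (varIdeal R S).map (killVars R A) ≤ varIdeal R S := by
  rw [varIdeal, Ideal.map_span, Ideal.span_le]
  rintro _ ⟨_, ⟨i, hi, rfl⟩, rfl⟩
  rw [killVars_X_of_notMem (h.notMem_of_mem_right hi)]
  exact Ideal.subset_span ⟨i, hi, rfl⟩

end MvPolynomial

namespace Admissible

variable {L : Type*} [Lattice L] {S : Set L}

theorem inf_notMem_and_sup_notMem (hS : Admissible S) {a b : L} (hab : ¬ a ≤ b) (hba : ¬ b ≤ a)
    (ha : a ∉ S) (hb : b ∉ S) : a ⊓ b ∉ S ∧ a ⊔ b ∉ S := by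
  rw [← not_or, ← hS a b hab hba]
  exact fun h ↦ h.elim ha hb

def sublattice (hS : Admissible S) : Sublattice L where
  carrier := Sᶜ
  supClosed' a ha b hb := by
    by_cases hab : a ≤ b
    · rwa [sup_of_le_right hab]
    by_cases hba : b ≤ a
    · rwa [sup_of_le_left hba]
    exact (hS.inf_notMem_and_sup_notMem hab hba ha hb).2
  infClosed' a ha b hb := by
    by_cases hab : a ≤ b
    · rwa [inf_of_le_left hab]
    by_cases hba : b ≤ a
    · rwa [inf_of_le_right hba]
    exact (hS.inf_notMem_and_sup_notMem hab hba ha hb).1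

@[simp]
theorem mem_sublattice (hS : Admissible S) {a : L} : a ∈ hS.sublattice ↔ a ∉ S := Iff.rfl

theorem sublatticeJoinMeetIdeal_eq_map (K : Type*) [Field K] (hS : Admissible S) :
    sublatticeJoinMeetIdeal K L S = (joinMeetIdeal K hS.sublattice).map (rename Subtype.val) := by
  rw [sublatticeJoinMeetIdeal, joinMeetIdeal, Ideal.map_span]
  congr 1
  ext f
  constructor
  · rintro ⟨a, b, ha, hb, hab, hba, rfl⟩
    exact ⟨_, ⟨⟨a, ha⟩, ⟨b, hb⟩, hab, hba, rfl⟩, by simp⟩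
  · rintro ⟨_, ⟨a, b, hab, hba, rfl⟩, rfl⟩
    exact ⟨a, b, a.2, b.2, hab, hba, by simp⟩

end Admissible

section PrimeIdeals

variable {L : Type*} [Lattice L] [Fintype L] (K : Type*) [Field K]

open scoped Classical

noncomputable def joinMeetColon (S : Set L) : Ideal (MvPolynomial L K) :=
  Submodule.colon (sublatticeJoinMeetIdeal K L S)
    ((Ideal.span {∏ a ∈ Finset.univ.filter (fun a : L => a ∉ S), X a} :
      Ideal (MvPolynomial L K)) : Set (MvPolynomial L K))

theorem PA_eq_sup (S : Set L) : PA K L S = joinMeetColon K S ⊔ varIdeal K S := rfl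

theorem joinMeetColon_eq_map {S : Set L} (hS : Admissible S) :
    joinMeetColon K S = ((joinMeetIdeal K hS.sublattice).colon
      (Ideal.span {∏ a, X a} : Ideal (MvPolynomial hS.sublattice K))).map
        (rename Subtype.val) := by
  have hprod : ∏ a ∈ Finset.univ.filter (fun a : L => a ∉ S), (X a : MvPolynomial L K) =
      rename Subtype.val (∏ a : hS.sublattice, X a) := by
    rw [map_prod]
    simp only [rename_X]
    exact Finset.prod_subtype _ (fun a ↦ by simp) _
  rw [joinMeetColon, hprod, hS.sublatticeJoinMeetIdeal_eq_map K, map_rename_subtypeVal_colon]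

theorem PA_le_ker_eval {S : Set L} (hS : Admissible S) :
    PA K L S ≤ RingHom.ker (eval fun a ↦ if a ∈ S then (0 : K) else 1) := by
  set ev : MvPolynomial L K →+* K := eval fun a ↦ if a ∈ S then (0 : K) else 1
  have hI : sublatticeJoinMeetIdeal K L S ≤ RingHom.ker ev := by
    refine Ideal.span_le.2 ?_
    rintro _ ⟨a, b, ha, hb, hab, hba, rfl⟩
    obtain ⟨hinf, hsup⟩ := hS.inf_notMem_and_sup_notMem hab hba ha hb
    simp [ev, ha, hb, hinf, hsup]
  have hprod : ev (∏ a ∈ Finset.univ.filter (fun a : L => a ∉ S), X a) = 1 :=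
    (map_prod ev _ _).trans (Finset.prod_eq_one fun _ ha ↦ by simp_all [ev])
  refine sup_le (fun g hg ↦ ?_) (Ideal.span_le.2 ?_)
  · have := hI (Ideal.mem_colon_span_singleton.1 hg)
    rwa [RingHom.mem_ker, map_mul, hprod, mul_one] at this
  · rintro _ ⟨a, ha, rfl⟩
    simp [ev, ha]

theorem X_mem_PA {S : Set L} {a : L} (ha : a ∈ S) : (X a : MvPolynomial L K) ∈ PA K L S :=
  Submodule.mem_sup_right (Ideal.subset_span ⟨a, ha, rfl⟩)

theorem X_mem_PA_iff {S : Set L} (hS : Admissible S) {a : L} :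
    (X a : MvPolynomial L K) ∈ PA K L S ↔ a ∈ S := by
  refine ⟨fun h ↦ ?_, X_mem_PA K⟩
  by_contra ha
  simpa [ha] using PA_le_ker_eval K hS h

theorem subset_of_PA_le_PA {A B : Set L} (hB : Admissible B) (h : PA K L A ≤ PA K L B) :
    A ⊆ B := fun _ ha ↦ (X_mem_PA_iff K hB).1 (h (X_mem_PA K ha))

theorem map_killVars_joinMeetColon_le {A S : Set L} (hS : Admissible S) (hAS : A ⊆ S) :
    (joinMeetColon K S).map (killVars K A) ≤ joinMeetColon K S := by
  rw [joinMeetColon_eq_map K hS, Ideal.map_le_iff_le_comap, Ideal.map_le_iff_le_comap]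
  intro q hq
  rw [Ideal.mem_comap, Ideal.mem_comap, ← AlgHom.comp_apply,
    killVars_comp_rename_subtypeVal fun a ha haA ↦ ha (hAS haA)]
  exact Ideal.mem_map_of_mem _ hq

theorem joinMeetColon_le_of_le_sup_varIdeal {A : Set L} (hA : Admissible A)
    {T : Ideal (MvPolynomial L K)} (hT : T.map (killVars K A) ≤ T)
    (h : joinMeetColon K A ≤ T ⊔ varIdeal K A) : joinMeetColon K A ≤ T := by
  have hgen := joinMeetColon_eq_map K hA
  rw [hgen, Ideal.map_le_iff_le_comap]
  intro q hq
  have hq' := Ideal.mem_map_of_mem (killVars K A) (h (hgen ▸ Ideal.mem_map_of_mem _ hq))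
  rw [← AlgHom.comp_apply, killVars_comp_rename_subtypeVal (p := (· ∈ hA.sublattice)) fun _ ↦ id,
    Ideal.map_sup, map_killVars_varIdeal_self, sup_bot_eq] at hq'
  exact hT hq'

theorem PA_le_PA_iff {A B : Set L} (hA : Admissible A) (hB : Admissible B) (hAB : A ⊆ B) :
    PA K L A ≤ PA K L B ↔ joinMeetColon K A ≤ joinMeetColon K B ⊔ varIdeal K (B \ A) := by
  rw [PA_eq_sup, PA_eq_sup, ← varIdeal_sdiff_sup_varIdeal hAB, ← sup_assoc, sup_le_iff]
  refine ⟨fun h ↦ joinMeetColon_le_of_le_sup_varIdeal K hA ?_ h.1,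
    fun h ↦ ⟨le_sup_of_le_left h, le_sup_right⟩⟩
  rw [Ideal.map_sup]
  exact sup_le_sup (map_killVars_joinMeetColon_le K hB hAB)
    (map_killVars_varIdeal_le Set.disjoint_sdiff_right)

end PrimeIdeals

open scoped Classical in
theorem PA_ssubset_PB_iff_general
    {L : Type*} [Lattice L] [Fintype L] (K : Type*) [Field K]
    (A B : Set L) (hA : Admissible A) (hB : Admissible B) :
    PA K L A < PA K L B ↔
      (A ⊂ B ∧
        Submodule.colon (sublatticeJoinMeetIdeal K L A)
            ((Ideal.span {∏ a ∈ Finset.univ.filter (fun a : L => a ∉ A), X a} : Ideal (MvPolynomial L K)) : Set (MvPolynomial L K)) ≤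
          Submodule.colon (sublatticeJoinMeetIdeal K L B)
              ((Ideal.span {∏ b ∈ Finset.univ.filter (fun b : L => b ∉ B), X b} : Ideal (MvPolynomial L K)) : Set (MvPolynomial L K)) ⊔
            Ideal.span {f | ∃ b ∈ B \ A, f = (X b : MvPolynomial L K)}) := by
  change _ ↔ A ⊂ B ∧ joinMeetColon K A ≤ joinMeetColon K B ⊔ varIdeal K (B \ A)
  constructor
  · intro hlt
    have hAB := subset_of_PA_le_PA K hB hlt.le
    exact ⟨hAB.ssubset_of_ne (by rintro rfl; exact hlt.ne rfl),
      (PA_le_PA_iff K hA hB hAB).1 hlt.le⟩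
  · rintro ⟨hAB, hQ⟩
    exact lt_of_le_not_ge ((PA_le_PA_iff K hA hB hAB.subset).2 hQ)
      fun h ↦ hAB.not_subset (subset_of_PA_le_PA K hA h)

open scoped Classical in
/-- **Proposition.** Let `I_L` be radical and `A, B ⊆ L` admissible. Then `P_A(L) ⊊ P_B(L)`
iff `A ⊊ B` and `I_{L_A} : ∏_{a ∉ A} X a ⊆ (I_{L_B} : ∏_{b ∉ B} X b) + (X b : b ∈ B ∖ A)`. -/
theorem PA_ssubset_PB_iff
    {L : Type*} [Lattice L] [Fintype L] (K : Type*) [Field K]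
    (hrad : (joinMeetIdeal K L).IsRadical)
    (A B : Set L) (hA : Admissible A) (hB : Admissible B) :
    PA K L A < PA K L B ↔
      (A ⊂ B ∧
        Submodule.colon (sublatticeJoinMeetIdeal K L A)
            ((Ideal.span {∏ a ∈ Finset.univ.filter (fun a : L => a ∉ A), X a} : Ideal (MvPolynomial L K)) : Set (MvPolynomial L K)) ≤
          Submodule.colon (sublatticeJoinMeetIdeal K L B)
              ((Ideal.span {∏ b ∈ Finset.univ.filter (fun b : L => b ∉ B), X b} : Ideal (MvPolynomial L K)) : Set (MvPolynomial L K)) ⊔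
            Ideal.span {f | ∃ b ∈ B \ A, f = (X b : MvPolynomial L K)}) :=
  PA_ssubset_PB_iff_general K A B hA hB
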